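/- Let A and B be n×n Hermitian positive semidefinite complex matrices with eigenvalues α_1 ≥ … ≥ α_n and β_1 ≥ … ≥ β_n (in decreasing order), and let √A denote the positive semidefinite square root of A. Then det( I + √A · B · √A ) ≤ ∏_{i=1}^{n} ( 1 + α_i β_i ). -/

import Mathlib

/-!
Let `μ₁ ≥ ⋯ ≥ μₙ` be the eigenvalues of `M = √A B √A`, so that `det (1 + M) = ∏ (1 + μᵢ)`.
Horn's inequalities `μ₁ ⋯ μ_k ≤ α₁ ⋯ α_k β₁ ⋯ β_k` follow by compressing `M` to its top `k`
eigenvectors `V`: with `W = √A V`,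
`μ₁ ⋯ μ_k = det (Vᴴ M V) = det (Wᴴ B W) ≤ β₁ ⋯ β_k det (Wᴴ W) = β₁ ⋯ β_k det (Vᴴ A V)
≤ β₁ ⋯ β_k α₁ ⋯ α_k`, both inequalities by the Cauchy–Binet formula. This weak
log-majorization gives `∏ (1 + μᵢ) ≤ ∏ (1 + αᵢ βᵢ)`: after taking logarithms, the tangent
inequality of the convex function `t ↦ log (1 + eᵗ)` at `log μᵢ` reduces it to an Abel summation
against the decreasing weights `μᵢ / (1 + μᵢ)`.
-/

open Matrix BigOperators ComplexOrder

/-- `Matrix.PosSemidef.sqrt` was removed from Mathlib; this restores its December 2024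
definition verbatim (the PSD square root via the spectral theorem). -/
noncomputable def Matrix.PosSemidef.sqrt {n 𝕜 : Type*} [RCLike 𝕜] [Fintype n] [DecidableEq n]
    {A : Matrix n n 𝕜} (hA : A.PosSemidef) : Matrix n n 𝕜 :=
  hA.1.eigenvectorUnitary.1 * diagonal ((↑) ∘ (√·) ∘ hA.1.eigenvalues) *
  (star hA.1.eigenvectorUnitary : Matrix n n 𝕜)

open Equiv Finset Function

section Sequences

open Real

theorem Fin.val_le_of_strictMono {k : ℕ} {f : Fin k → ℕ} (hf : StrictMono f) (i : Fin k) :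
    (i : ℕ) ≤ f i := by
  obtain ⟨i, hi⟩ := i
  induction i with
  | zero => exact Nat.zero_le _
  | succ i ih =>
    exact (ih (by omega)).trans_lt (hf (show (⟨i, _⟩ : Fin k) < ⟨i + 1, hi⟩ from i.lt_succ_self))

theorem Antitone.prod_comp_le_prod_range {β : ℕ → ℝ} (hβ : Antitone β) (hβ0 : ∀ i, 0 ≤ β i)
    {k : ℕ} {h : Fin k → ℕ} (hh : Injective h) : ∏ i, β (h i) ≤ ∏ i ∈ range k, β i := by
  have hsorted : StrictMono (h ∘ Tuple.sort h) :=
    (Tuple.monotone_sort h).strictMono_of_injective (hh.comp (Equiv.injective _))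
  rw [← Equiv.prod_comp (Tuple.sort h), ← Fin.prod_univ_eq_prod_range]
  exact prod_le_prod (fun i _ => hβ0 _) fun i _ => hβ (Fin.val_le_of_strictMono hsorted i)

theorem extend_val_zero_nonneg {n : ℕ} {α : Fin n → ℝ} (hα0 : ∀ i, 0 ≤ α i) (i : ℕ) :
    0 ≤ extend Fin.val α 0 i := by
  by_cases hi : ∃ j : Fin n, (j : ℕ) = i
  · obtain ⟨j, rfl⟩ := hi
    rw [Fin.val_injective.extend_apply]
    exact hα0 j
  · rw [extend_apply' _ _ _ hi]
    rfl

theorem Antitone.extend_val_zero {n : ℕ} {α : Fin n → ℝ} (hα : Antitone α) (hα0 : ∀ i, 0 ≤ α i) :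
    Antitone (extend Fin.val α 0) := by
  intro i j hij
  by_cases hj : ∃ b : Fin n, (b : ℕ) = j
  · obtain ⟨b, rfl⟩ := hj
    obtain ⟨a, rfl⟩ : ∃ a : Fin n, (a : ℕ) = i := ⟨⟨i, hij.trans_lt b.2⟩, rfl⟩
    simp only [Fin.val_injective.extend_apply]
    exact hα hij
  · rw [extend_apply' _ _ _ hj]
    exact extend_val_zero_nonneg hα0 i

theorem sum_mul_nonneg_of_antitone {s c : ℕ → ℝ} (hs : Antitone s) (hs0 : ∀ i, 0 ≤ s i) {m : ℕ}
    (hc : ∀ k ≤ m, 0 ≤ ∑ i ∈ range k, c i) : 0 ≤ ∑ i ∈ range m, s i * c i := by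
  cases m with
  | zero => simp
  | succ m =>
    have hparts := sum_range_by_parts s c (m + 1)
    simp only [smul_eq_mul, Nat.add_sub_cancel] at hparts
    rw [hparts]
    refine sub_nonneg_of_le ((sum_nonpos fun i hi => ?_).trans (mul_nonneg (hs0 m) (hc _ le_rfl)))
    exact mul_nonpos_of_nonpos_of_nonneg (sub_nonpos.2 (hs i.le_succ))
      (hc _ (Nat.succ_le_of_lt (mem_range.1 hi) |>.trans m.le_succ))

theorem mul_log_sub_log_le_log_one_add_sub {a b : ℝ} (ha : 0 < a) (hb : 0 < b) :
    a / (1 + a) * (log b - log a) ≤ log (1 + b) - log (1 + a) := by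
  have h1a : 0 < 1 + a := by linarith
  have hconc := strictConcaveOn_log_Ioi.concaveOn.2 (Set.mem_Ioi.2 one_pos)
    (Set.mem_Ioi.2 (div_pos hb ha)) (div_nonneg zero_le_one h1a.le) (div_nonneg ha.le h1a.le)
    (by field_simp)
  have hmix : 1 / (1 + a) * 1 + a / (1 + a) * (b / a) = (1 + b) / (1 + a) := by
    field_simp
  simp only [smul_eq_mul, log_one, mul_zero, zero_add, hmix] at hconc
  rwa [log_div hb.ne' ha.ne', log_div (by linarith) h1a.ne'] at hconc

theorem prod_one_add_le_of_forall_prod_le_of_pos {x y : ℕ → ℝ} {m : ℕ} (hx : Antitone x)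
    (hx0 : ∀ i, 0 ≤ x i) (hxm : ∀ i < m, 0 < x i) (hy0 : ∀ i, 0 ≤ y i)
    (h : ∀ k ≤ m, ∏ i ∈ range k, x i ≤ ∏ i ∈ range k, y i) :
    ∏ i ∈ range m, (1 + x i) ≤ ∏ i ∈ range m, (1 + y i) := by
  have hxpos : ∀ k ≤ m, 0 < ∏ i ∈ range k, x i := fun k hk =>
    prod_pos fun i hi => hxm i ((mem_range.1 hi).trans_le hk)
  have hym : ∀ i < m, 0 < y i := fun i hi => by
    refine (hy0 i).lt_of_ne' fun hyi => ?_
    have := h (i + 1) hi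
    rw [prod_range_succ y, hyi, mul_zero] at this
    exact this.not_gt (hxpos _ hi)
  have hs : Antitone fun i => x i / (1 + x i) := fun i j hij => by
    have := hx hij
    rw [div_le_div_iff₀ (by linarith [hx0 j]) (by linarith [hx0 i])]
    nlinarith
  rw [← log_le_log_iff (prod_pos fun i _ => by linarith [hx0 i])
      (prod_pos fun i _ => by linarith [hy0 i]),
    log_prod fun i _ => by linarith [hx0 i], log_prod fun i _ => by linarith [hy0 i],
    ← sub_nonneg, ← sum_sub_distrib]
  refine (sum_mul_nonneg_of_antitone hs (fun i => div_nonneg (hx0 i) (by linarith [hx0 i]))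
    (c := fun i => log (y i) - log (x i)) fun k hk => ?_).trans
    (sum_le_sum fun i hi => mul_log_sub_log_le_log_one_add_sub (hxm i (mem_range.1 hi))
      (hym i (mem_range.1 hi)))
  rw [sum_sub_distrib, ← log_prod fun i hi => (hym i ((mem_range.1 hi).trans_le hk)).ne',
    ← log_prod fun i hi => (hxm i ((mem_range.1 hi).trans_le hk)).ne', sub_nonneg]
  exact log_le_log (hxpos k hk) (h k hk)

theorem prod_one_add_le_of_forall_prod_le {x y : ℕ → ℝ} {m : ℕ} (hx : Antitone x)
    (hx0 : ∀ i, 0 ≤ x i) (hy0 : ∀ i, 0 ≤ y i)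
    (h : ∀ k ≤ m, ∏ i ∈ range k, x i ≤ ∏ i ∈ range k, y i) :
    ∏ i ∈ range m, (1 + x i) ≤ ∏ i ∈ range m, (1 + y i) := by
  induction m with
  | zero => simp
  | succ m ih =>
    rcases (hx0 m).eq_or_lt with hxm | hxm
    · rw [prod_range_succ, prod_range_succ, ← hxm, add_zero, mul_one]
      exact (ih fun k hk => h k (hk.trans m.le_succ)).trans (le_mul_of_one_le_right
        (prod_nonneg fun i _ => by linarith [hy0 i]) (by linarith [hy0 m]))
    · exact prod_one_add_le_of_forall_prod_le_of_pos hx hx0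
        (fun i hi => hxm.trans_le (hx (Nat.lt_succ_iff.1 hi))) hy0 h

theorem prod_comp_le_prod_range_extend_val {n k : ℕ} {α d : Fin n → ℝ} (hα : Antitone α)
    (hα0 : ∀ i, 0 ≤ α i) {e : Perm (Fin n)} (he : ∀ i, α i = d (e i)) {g : Fin k → Fin n}
    (hg : Injective g) : ∏ i, d (g i) ≤ ∏ i ∈ range k, extend Fin.val α 0 i := by
  have h := (hα.extend_val_zero hα0).prod_comp_le_prod_range (extend_val_zero_nonneg hα0)
    (Fin.val_injective.comp (e.symm.injective.comp hg))
  simpa [Fin.val_injective.extend_apply, he] using h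

end Sequences

namespace Matrix

section CauchyBinet

variable {R : Type*} [CommRing R] {m n : Type*} [Fintype m] [DecidableEq m] [Fintype n]

theorem det_mul_eq_sum_prod_mul_det_submatrix (X : Matrix m n R) (Y : Matrix n m R) :
    det (X * Y) = ∑ p : m → n, (∏ i, Y (p i) i) * det (X.submatrix id p) := by
  simp only [det_apply', mul_apply, prod_univ_sum, mul_sum, Fintype.piFinset_univ,
    submatrix_apply, id_eq, prod_mul_distrib]
  rw [sum_comm]
  refine sum_congr rfl fun p _ => sum_congr rfl fun σ _ => ?_
  ring

variable {k : ℕ} [LinearOrder n]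

theorem sum_injective_eq_sum_strictMono_sum_perm {M : Type*} [AddCommMonoid M]
    [DecidablePred (StrictMono : (Fin k → n) → Prop)] (F : (Fin k → n) → M) :
    ∑ p : Fin k → n with Injective p, F p =
      ∑ g : Fin k → n with StrictMono g, ∑ τ : Perm (Fin k), F (g ∘ τ) := by
  rw [← sum_product']
  symm
  refine sum_nbij (fun gτ => gτ.1 ∘ gτ.2) ?_ ?_ ?_ fun _ _ => rfl
  · simp only [mem_product, mem_filter, mem_univ, true_and, and_true]
    exact fun gτ hg => hg.injective.comp gτ.2.injective
  · rintro ⟨g, τ⟩ hg ⟨g', τ'⟩ hg' h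
    simp only [coe_product, Set.mem_prod, coe_filter, mem_univ, true_and, Set.mem_ofPred_eq,
      coe_univ, Set.mem_univ, and_true] at hg hg' h
    have hgg' : g = g' := by
      rw [← hg.range_inj hg', ← EquivLike.range_comp g τ, h, EquivLike.range_comp]
    subst hgg'
    simp only [Prod.mk.injEq, true_and]
    exact Equiv.ext fun i => hg.injective (congrFun h i)
  · intro p hp
    simp only [coe_filter, mem_univ, true_and, Set.mem_ofPred_eq] at hp
    refine ⟨(p ∘ Tuple.sort p, (Tuple.sort p)⁻¹), ?_, ?_⟩
    · simp only [coe_product, Set.mem_prod, coe_filter, mem_univ, true_and, Set.mem_ofPred_eq,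
        coe_univ, Set.mem_univ, and_true]
      exact (Tuple.monotone_sort p).strictMono_of_injective (hp.comp (Equiv.injective _))
    · ext i
      simp

open scoped Classical in
theorem det_mul_eq_sum_strictMono (X : Matrix (Fin k) n R) (Y : Matrix n (Fin k) R) :
    det (X * Y) = ∑ g : Fin k → n with StrictMono g,
      det (X.submatrix id g) * det (Y.submatrix g id) := by
  rw [det_mul_eq_sum_prod_mul_det_submatrix, ← sum_filter_of_ne (p := Injective),
    sum_injective_eq_sum_strictMono_sum_perm]
  · refine sum_congr rfl fun g _ => ?_
    have h : ∀ τ : Perm (Fin k), X.submatrix id (g ∘ τ) = (X.submatrix id g).submatrix id τ :=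
      fun _ => rfl
    simp_rw [h, det_permute', det_apply' (Y.submatrix g id), mul_sum, submatrix_apply, id_eq]
    exact sum_congr rfl fun τ _ => by rw [mul_comm, mul_assoc]; exact mul_left_comm _ _ _
  · intro p _ hp
    by_contra hinj
    obtain ⟨i, j, hij, hne⟩ := Function.not_injective_iff.mp hinj
    exact hp (by rw [det_zero_of_column_eq hne fun r => by simp [hij], mul_zero])

end CauchyBinet

variable {𝕜 : Type*} [RCLike 𝕜]

theorem det_mul_diagonal_mul_conjTranspose_le {k n : ℕ} (X : Matrix (Fin k) (Fin n) 𝕜)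
    (d : Fin n → ℝ) {c : ℝ} (hc : ∀ g : Fin k → Fin n, StrictMono g → ∏ i, d (g i) ≤ c) :
    det (X * diagonal (fun i => (d i : 𝕜)) * Xᴴ) ≤ c * det (X * Xᴴ) := by
  rw [Matrix.mul_assoc, det_mul_eq_sum_strictMono, det_mul_eq_sum_strictMono, mul_sum]
  refine sum_le_sum fun g hg => ?_
  have hsub : (diagonal (fun i => (d i : 𝕜)) * Xᴴ).submatrix g id =
      diagonal (fun i => (d (g i) : 𝕜)) * (X.submatrix id g)ᴴ := by
    ext i j
    simp [diagonal_mul]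
  rw [hsub, det_mul, det_diagonal, ← conjTranspose_submatrix, det_conjTranspose, mul_left_comm]
  refine mul_le_mul_of_nonneg_right ?_ (mul_star_self_nonneg _)
  exact_mod_cast hc g (mem_filter.1 hg).2

theorem IsHermitian.det_conjTranspose_mul_mul_le {k n : ℕ} {B : Matrix (Fin n) (Fin n) 𝕜}
    (hB : B.IsHermitian) (W : Matrix (Fin n) (Fin k) 𝕜) {c : ℝ}
    (hc : ∀ g : Fin k → Fin n, StrictMono g → ∏ i, hB.eigenvalues (g i) ≤ c) :
    det (Wᴴ * B * W) ≤ c * det (Wᴴ * W) := by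
  set U : Matrix (Fin n) (Fin n) 𝕜 := (hB.eigenvectorUnitary : Matrix (Fin n) (Fin n) 𝕜)
  have hB' : B = U * diagonal (fun i => (hB.eigenvalues i : 𝕜)) * Uᴴ := hB.spectral_theorem
  have hUU : U * Uᴴ = 1 := Unitary.mul_star_self_of_mem hB.eigenvectorUnitary.2
  have hBW : Wᴴ * B * W = Wᴴ * U * diagonal (fun i => (hB.eigenvalues i : 𝕜)) * (Wᴴ * U)ᴴ := by
    nth_rw 1 [hB']
    simp only [conjTranspose_mul, conjTranspose_conjTranspose, Matrix.mul_assoc]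
  have hWW : Wᴴ * W = Wᴴ * U * (Wᴴ * U)ᴴ := by
    rw [conjTranspose_mul, conjTranspose_conjTranspose, Matrix.mul_assoc, ← Matrix.mul_assoc U,
      hUU, Matrix.one_mul]
  rw [hBW, hWW]
  exact det_mul_diagonal_mul_conjTranspose_le (Wᴴ * U) hB.eigenvalues hc

section Eigenvectors

variable {m n : Type*} [Fintype n] [DecidableEq n] [DecidableEq m] {M : Matrix n n 𝕜}
  (hM : M.IsHermitian) {g : m → n}

theorem IsHermitian.conjTranspose_mul_mul_submatrix_eigenvectorUnitary (hg : Injective g) :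
    ((hM.eigenvectorUnitary : Matrix n n 𝕜).submatrix id g)ᴴ * M *
        (hM.eigenvectorUnitary : Matrix n n 𝕜).submatrix id g =
      diagonal (fun i => (hM.eigenvalues (g i) : 𝕜)) := by
  have h := hM.conjStarAlgAut_star_eigenvectorUnitary
  rw [Unitary.conjStarAlgAut_star_apply] at h
  generalize (hM.eigenvectorUnitary : Matrix n n 𝕜) = U, hM.eigenvalues = d at h ⊢
  rw [conjTranspose_submatrix, ← submatrix_id_id M, ← submatrix_mul _ _ _ _ _ bijective_id,
    ← submatrix_mul _ _ _ _ _ bijective_id, ← star_eq_conjTranspose, h, submatrix_diagonal _ _ hg]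
  rfl

theorem IsHermitian.conjTranspose_mul_submatrix_eigenvectorUnitary (hg : Injective g) :
    ((hM.eigenvectorUnitary : Matrix n n 𝕜).submatrix id g)ᴴ *
        (hM.eigenvectorUnitary : Matrix n n 𝕜).submatrix id g = 1 := by
  rw [conjTranspose_submatrix, ← submatrix_mul _ _ _ _ _ bijective_id, ← star_eq_conjTranspose,
    Unitary.coe_star_mul_self, submatrix_one _ hg]

end Eigenvectors

section Sqrt

open scoped MatrixOrder

variable {n : Type*} [Fintype n] [DecidableEq n] {A : Matrix n n 𝕜}

theorem PosSemidef.sqrt_eq_cfcSqrt (hA : A.PosSemidef) : hA.sqrt = CFC.sqrt A := by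
  rw [CFC.sqrt_eq_real_sqrt A hA.nonneg, cfcₙ_eq_cfc, hA.1.cfc_eq]
  rfl

theorem PosSemidef.sqrt_mul_self (hA : A.PosSemidef) : hA.sqrt * hA.sqrt = A := by
  rw [hA.sqrt_eq_cfcSqrt, CFC.sqrt_mul_sqrt_self A hA.nonneg]

theorem PosSemidef.isHermitian_sqrt (hA : A.PosSemidef) : hA.sqrt.IsHermitian := by
  rw [hA.sqrt_eq_cfcSqrt]
  exact (CFC.sqrt_nonneg A).posSemidef.isHermitian

theorem PosSemidef.sqrt_mul_mul_sqrt {B : Matrix n n 𝕜} (hA : A.PosSemidef) (hB : B.PosSemidef) :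
    (hA.sqrt * B * hA.sqrt).PosSemidef := by
  simpa only [hA.isHermitian_sqrt.eq] using hB.mul_mul_conjTranspose_same hA.sqrt

theorem IsHermitian.det_one_add {M : Matrix n n 𝕜} (hM : M.IsHermitian) :
    det (1 + M) = ∏ i, (1 + hM.eigenvalues i : 𝕜) := by
  have h : 1 + M = cfc (fun x : ℝ => 1 + x) M := by
    rw [cfc_const_add (1 : ℝ) (fun x => x) M, cfc_id' ℝ M, map_one]
  rw [h, hM.cfc_eq]
  simp [IsHermitian.cfc, -Unitary.conjStarAlgAut_apply]

end Sqrt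

theorem prod_eigenvalues_sqrt_mul_mul_sqrt_le {n k : ℕ} {A B : Matrix (Fin n) (Fin n) 𝕜}
    (hA : A.PosSemidef) (hB : B.IsHermitian) (hM : (hA.sqrt * B * hA.sqrt).IsHermitian)
    {a b : ℝ} (hb : 0 ≤ b)
    (hαa : ∀ g : Fin k → Fin n, StrictMono g → ∏ i, hA.isHermitian.eigenvalues (g i) ≤ a)
    (hβb : ∀ g : Fin k → Fin n, StrictMono g → ∏ i, hB.eigenvalues (g i) ≤ b)
    {g : Fin k → Fin n} (hg : Injective g) :
    ∏ i, hM.eigenvalues (g i) ≤ a * b := by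
  set V := (hM.eigenvectorUnitary : Matrix (Fin n) (Fin n) 𝕜).submatrix id g
  have hS := hA.isHermitian_sqrt
  have hBW : (hA.sqrt * V)ᴴ * B * (hA.sqrt * V) = Vᴴ * (hA.sqrt * B * hA.sqrt) * V := by
    simp only [conjTranspose_mul, hS.eq, Matrix.mul_assoc]
  have hAW : (hA.sqrt * V)ᴴ * (hA.sqrt * V) = Vᴴ * A * V := by
    rw [conjTranspose_mul, hS.eq, Matrix.mul_assoc, ← Matrix.mul_assoc hA.sqrt, hA.sqrt_mul_self,
      Matrix.mul_assoc]
  have key : ((∏ i, hM.eigenvalues (g i) : ℝ) : 𝕜) ≤ ((a * b : ℝ) : 𝕜) := calc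
    _ = det (Vᴴ * (hA.sqrt * B * hA.sqrt) * V) := by
      rw [hM.conjTranspose_mul_mul_submatrix_eigenvectorUnitary hg, det_diagonal]
      push_cast
      rfl
    _ ≤ b * det (Vᴴ * A * V) := by
      rw [← hBW, ← hAW]
      exact hB.det_conjTranspose_mul_mul_le _ hβb
    _ ≤ b * (a * det (Vᴴ * V)) := by
      gcongr
      exact hA.isHermitian.det_conjTranspose_mul_mul_le V hαa
    _ = ((a * b : ℝ) : 𝕜) := by
      rw [hM.conjTranspose_mul_submatrix_eigenvectorUnitary hg, det_one]
      push_cast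
      ring
  exact_mod_cast key


theorem prod_range_extend_eigenvalues_sqrt_mul_mul_sqrt_le {n k : ℕ}
    {A B : Matrix (Fin n) (Fin n) 𝕜} (hA : A.PosSemidef) (hB : B.PosSemidef)
    (hM : (hA.sqrt * B * hA.sqrt).IsHermitian) {α β : Fin n → ℝ} (hα : Antitone α)
    (hβ : Antitone β) {eα eβ : Perm (Fin n)} (hαe : ∀ i, α i = hA.isHermitian.eigenvalues (eα i))
    (hβe : ∀ i, β i = hB.isHermitian.eigenvalues (eβ i)) (σ : Perm (Fin n)) (hk : k ≤ n) :
    ∏ i ∈ range k, extend Fin.val (hM.eigenvalues ∘ σ) 0 i ≤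
      ∏ i ∈ range k, extend Fin.val α 0 i * extend Fin.val β 0 i := by
  have hα0 : ∀ i, 0 ≤ α i := fun i => (hαe i).symm ▸ hA.eigenvalues_nonneg _
  have hβ0 : ∀ i, 0 ≤ β i := fun i => (hβe i).symm ▸ hB.eigenvalues_nonneg _
  have h := prod_eigenvalues_sqrt_mul_mul_sqrt_le hA hB.isHermitian hM
    (prod_nonneg fun i _ => extend_val_zero_nonneg hβ0 i)
    (fun g hg => prod_comp_le_prod_range_extend_val hα hα0 hαe hg.injective)
    (fun g hg => prod_comp_le_prod_range_extend_val hβ hβ0 hβe hg.injective)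
    (σ.injective.comp (Fin.castLE_injective hk))
  rw [prod_mul_distrib, ← Fin.prod_univ_eq_prod_range]
  simp only [← Fin.val_castLE hk, Fin.val_injective.extend_apply]
  exact h

end Matrix

/-- Determinant inequality used in the proof of Lemma 1 (via Hadamard's inequality and
Marshall–Olkin eigenvalue-product inequalities): for Hermitian positive semidefinite `A`,
`B` with eigenvalues `α_1 ≥ … ≥ α_n`, `β_1 ≥ … ≥ β_n`, and `√A` the PSD square root of `A`,
`det(I + √A B √A) ≤ ∏_i (1 + α_i β_i)`. -/
theorem stmt_4 {n : ℕ} (A B : Matrix (Fin n) (Fin n) ℂ)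
    (hA : A.PosSemidef) (hB : B.PosSemidef) (α β : Fin n → ℝ)
    (hαd : ∀ i j : Fin n, i ≤ j → α j ≤ α i)
    (hβd : ∀ i j : Fin n, i ≤ j → β j ≤ β i)
    (hαe : ∃ e : Equiv.Perm (Fin n), ∀ i, α i = hA.isHermitian.eigenvalues (e i))
    (hβe : ∃ e : Equiv.Perm (Fin n), ∀ i, β i = hB.isHermitian.eigenvalues (e i)) :
    ∃ d : ℝ, (1 + hA.sqrt * B * hA.sqrt).det = (d : ℂ) ∧ d ≤ ∏ i, (1 + α i * β i) := by
  obtain ⟨eα, hαe⟩ := hαe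
  obtain ⟨eβ, hβe⟩ := hβe
  have hα0 : ∀ i, 0 ≤ α i := fun i => (hαe i).symm ▸ hA.eigenvalues_nonneg _
  have hβ0 : ∀ i, 0 ≤ β i := fun i => (hβe i).symm ▸ hB.eigenvalues_nonneg _
  have hM := hA.sqrt_mul_mul_sqrt hB
  set μ := hM.isHermitian.eigenvalues
  obtain ⟨σ, hμσ⟩ : ∃ σ : Perm (Fin n), Antitone (μ ∘ σ) :=
    ⟨Tuple.sort (OrderDual.toDual ∘ μ), Tuple.monotone_sort (OrderDual.toDual ∘ μ)⟩
  have hμσ0 : ∀ i, 0 ≤ (μ ∘ σ) i := fun i => hM.eigenvalues_nonneg _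
  refine ⟨∏ i, (1 + μ i), by rw [hM.isHermitian.det_one_add]; push_cast; rfl, ?_⟩
  calc ∏ i, (1 + μ i) = ∏ i ∈ range n, (1 + extend Fin.val (μ ∘ σ) 0 i) := by
        rw [← Equiv.prod_comp σ,
          ← Fin.prod_univ_eq_prod_range (fun i => 1 + extend Fin.val (μ ∘ σ) 0 i)]
        simp [Fin.val_injective.extend_apply]
    _ ≤ ∏ i ∈ range n, (1 + extend Fin.val α 0 i * extend Fin.val β 0 i) :=
        prod_one_add_le_of_forall_prod_le (hμσ.extend_val_zero hμσ0) (extend_val_zero_nonneg hμσ0)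
          (fun i => mul_nonneg (extend_val_zero_nonneg hα0 i) (extend_val_zero_nonneg hβ0 i))
          fun k hk => prod_range_extend_eigenvalues_sqrt_mul_mul_sqrt_le hA hB hM.isHermitian
            hαd hβd hαe hβe σ hk
    _ = ∏ i, (1 + α i * β i) := by
        rw [← Fin.prod_univ_eq_prod_range
          (fun i => 1 + extend Fin.val α 0 i * extend Fin.val β 0 i)]
        simp [Fin.val_injective.extend_apply]
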